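/- (Stirling-type bound for binomial coefficients via Bernoulli KL divergence.) For all integers 0 < q < s, the binomial coefficient satisfies C(s,q) ≤ 2^s · √( s / (2π q (s−q)) ) · e^{1/(12s)} · exp( − s · KL( Be(q/s), Be(1/2) ) ), where KL(Be(u),Be(1/2)) = u log(2u) + (1−u) log(2(1−u)). Consequently, 2^s / C(s,q) ≥ √( 2π q (s−q)/s ) · e^{−1/(12s)} · exp( 2s (q/s − 1/2)² ). -/

import Mathlib

open MeasureTheory Filter

noncomputable section

namespace SSPT

/-- Index set of the free tree coordinates: a node at depth `l < L` with position `k < 2^l`.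
The coordinate at node `(l,k)` is the variable `Y_{ε0}` for the binary string `ε ≡ (l,k)`. -/
abbrev Node (L : ℕ) := (l : Fin L) × Fin (2 ^ (l : ℕ))

/-- Dyadic interval `I_{l,k} = (k 2^{-l}, (k+1) 2^{-l}]`. -/
def dyadic (l k : ℕ) : Set ℝ := Set.Ioc ((k : ℝ) / 2 ^ l) (((k : ℝ) + 1) / 2 ^ l)

/-- Number of sample points falling in a set. -/
def cnt {n : ℕ} (X : Fin n → ℝ) (s : Set ℝ) : ℕ := Nat.card {i : Fin n // X i ∈ s}

/-- `N_X(I_{l,k})`. -/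
def Ncnt {n : ℕ} (X : Fin n → ℝ) (l k : ℕ) : ℕ := cnt X (dyadic l k)

/-- `L = L(n)`: the largest integer with `2^L L² ≤ n`. -/
def Ln (n : ℕ) : ℕ := Nat.findGreatest (fun L => 2 ^ L * L ^ 2 ≤ n) n

/-- The tree variable `Y_{(l,k)}` (depth `1 ≤ l ≤ L`) built from the free coordinates
`y : Node L → ℝ`:  `Y_{ε0} = y(ε)` and `Y_{ε1} = 1 - y(ε)`.  Junk value `1/2` otherwise. -/
def Yt (L : ℕ) (y : Node L → ℝ) (l k : ℕ) : ℝ :=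
  if h : 0 < l ∧ l ≤ L ∧ k < 2 ^ l then
    have h1 : l - 1 < L := by omega
    have h2 : k / 2 < 2 ^ (l - 1) := by
      have hl : l - 1 + 1 = l := by omega
      have hk : k < 2 ^ (l - 1) * 2 := by rw [← pow_succ, hl]; exact h.2.2
      omega
    if k % 2 = 0 then y ⟨⟨l - 1, h1⟩, ⟨k / 2, h2⟩⟩ else 1 - y ⟨⟨l - 1, h1⟩, ⟨k / 2, h2⟩⟩
  else 1 / 2

/-- `P(I_ε) = ∏_{j=1}^{l} Y_{ε_1…ε_j}` for `ε ≡ (l,k)`. -/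
def Pmass (L : ℕ) (y : Node L → ℝ) : ℕ → ℕ → ℝ
  | 0, _ => 1
  | l + 1, k => Pmass L y l (k / 2) * Yt L y (l + 1) k

/-- The histogram density `f_Y = Σ_{|ε|=L} 2^L P(I_ε) 1_{I_ε}` associated with the tree. -/
def fY (L : ℕ) (y : Node L → ℝ) (x : ℝ) : ℝ :=
  ∑ k ∈ Finset.range (2 ^ L), (2 ^ L * Pmass L y L k) * (dyadic L k).indicator 1 x

/-- The Haar mother wavelet `ψ = -1 on (0,1/2], +1 on (1/2,1]`. -/
def haarMother (x : ℝ) : ℝ :=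
  (Set.Ioc (1 / 2 : ℝ) 1).indicator 1 x - (Set.Ioc (0 : ℝ) (1 / 2)).indicator 1 x

/-- `ψ_{lk}(x) = 2^{l/2} ψ(2^l x - k)`. -/
def psi (l k : ℕ) (x : ℝ) : ℝ := 2 ^ ((l : ℝ) / 2) * haarMother (2 ^ l * x - k)

/-- Haar coefficient `f_{lk} = ⟨f, ψ_{lk}⟩`. -/
def haarCoef (f : ℝ → ℝ) (l k : ℕ) : ℝ := ∫ x in Set.Ioc (0 : ℝ) 1, f x * psi l k x

/-- Hölder-type ball `H(α,R)`. -/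
def holder (α R : ℝ) (f : ℝ → ℝ) : Prop :=
  ∀ l k : ℕ, k < 2 ^ l → |haarCoef f l k| ≤ R * 2 ^ (-(l : ℝ) * (α + 1 / 2))

/-- The class `F(m0,m1)` of densities on `(0,1]` bounded below and above. -/
def densClass (m0 m1 : ℝ) (f : ℝ → ℝ) : Prop :=
  Measurable f ∧ (∫ x in Set.Ioc (0 : ℝ) 1, f x) = 1 ∧
    ∀ x ∈ Set.Ioc (0 : ℝ) 1, m0 ≤ f x ∧ f x ≤ m1

/-- The measure `P_f` with density `f` on `(0,1]`. -/
def Pf (f : ℝ → ℝ) : Measure ℝ :=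
  (volume.restrict (Set.Ioc (0 : ℝ) 1)).withDensity fun x => ENNReal.ofReal (f x)

/-- Law of an i.i.d. `n`-sample from `P_f`. -/
def Pn (n : ℕ) (f : ℝ → ℝ) : Measure (Fin n → ℝ) := Measure.pi fun _ => Pf f

/-- Beta function `B(a,b)`. -/
def betaFn (a b : ℝ) : ℝ := Real.Gamma a * Real.Gamma b / Real.Gamma (a + b)

/-- The `Beta(a,b)` distribution on `(0,1]`. -/
def betaMeasure (a b : ℝ) : Measure ℝ :=
  (volume.restrict (Set.Ioc (0 : ℝ) 1)).withDensity fun x =>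
    ENNReal.ofReal (x ^ (a - 1) * (1 - x) ^ (b - 1) / betaFn a b)

/-- Spike and slab mixture `(1-p) δ_{1/2} + p μ`. -/
def mix (p : ℝ) (μ : Measure ℝ) : Measure ℝ :=
  ENNReal.ofReal (1 - p) • Measure.dirac (1 / 2 : ℝ) + ENNReal.ofReal p • μ

/-- The spike-and-slab Pólya tree prior with slab `Beta(a,a)` and slab weights
`π j` at depth `j` (the coordinate at node `(l,k)` is `Y_{ε0}` with `|ε0| = l+1`). -/
def ssPrior (L : ℕ) (a : ℝ) (π : ℕ → ℝ) : Measure (Node L → ℝ) :=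
  Measure.pi fun p => mix (π ((p.1 : ℕ) + 1)) (betaMeasure a a)

/-- Likelihood of the sample under the histogram density `f_Y`. -/
def lik {n : ℕ} (L : ℕ) (X : Fin n → ℝ) (y : Node L → ℝ) : ℝ := ∏ i, fY L y (X i)

/-- The posterior distribution `Π(· | X)` of the tree coordinates, obtained from the
prior via Bayes' formula. -/
def post {n : ℕ} (L : ℕ) (a : ℝ) (π : ℕ → ℝ) (X : Fin n → ℝ) : Measure (Node L → ℝ) :=
  ((((ssPrior L a π).withDensity fun y => ENNReal.ofReal (lik L X y)) Set.univ)⁻¹) •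
    ((ssPrior L a π).withDensity fun y => ENNReal.ofReal (lik L X y))

/-- `T(ε,X) = 2^{N_X(I_ε)} B(N_X(I_{ε0})+a, N_X(I_{ε1})+a)/B(a,a)`. -/
def Tstat {n : ℕ} (a : ℝ) (X : Fin n → ℝ) (l k : ℕ) : ℝ :=
  2 ^ Ncnt X l k *
    betaFn ((Ncnt X (l + 1) (2 * k) : ℝ) + a) ((Ncnt X (l + 1) (2 * k + 1) : ℝ) + a) / betaFn a a

/-- Posterior slab weight `π̃_{ε0}`. -/
def piT {n : ℕ} (a : ℝ) (π : ℕ → ℝ) (X : Fin n → ℝ) (l k : ℕ) : ℝ :=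
  π (l + 1) * Tstat a X l k / ((1 - π (l + 1)) + π (l + 1) * Tstat a X l k)

/-- The (explicit, conjugate) marginal posterior distribution of `Y_{ε0}` for `ε ≡ (l,k)`:
`(1-π̃_{ε0}) δ_{1/2} + π̃_{ε0} Beta(N_X(I_{ε0})+a, N_X(I_{ε1})+a)`. -/
def margPost {n : ℕ} (a : ℝ) (π : ℕ → ℝ) (X : Fin n → ℝ) (l k : ℕ) : Measure ℝ :=
  mix (piT a π X l k)
    (betaMeasure ((Ncnt X (l + 1) (2 * k) : ℝ) + a) ((Ncnt X (l + 1) (2 * k + 1) : ℝ) + a))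

/-- The explicit (conjugate) posterior: product of the marginal posteriors. -/
def postExplicit {n : ℕ} (L : ℕ) (a : ℝ) (π : ℕ → ℝ) (X : Fin n → ℝ) :
    Measure (Node L → ℝ) :=
  Measure.pi fun p => margPost a π X (p.1 : ℕ) (p.2 : ℕ)

/-- `F_0(I_{l,k}) = ∫_{I_{l,k}} f_0`. -/
def F0 (f0 : ℝ → ℝ) (l k : ℕ) : ℝ := ∫ x in dyadic l k, f0 x

/-- `y_{ε0} = F_0(I_{ε0})/F_0(I_ε)` for `ε ≡ (l,k)`. -/
def yeps (f0 : ℝ → ℝ) (l k : ℕ) : ℝ := F0 f0 (l + 1) (2 * k) / F0 f0 l k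

/-- The event `B = B(M)`:  `|N_X(I^l_k) - n F_0(I^l_k)| ≤ M √((l+L)n/2^l)` for all `l ≤ L`, `k < 2^l`. -/
def eventB (n : ℕ) (M : ℝ) (f0 : ℝ → ℝ) : Set (Fin n → ℝ) :=
  {X | ∀ l ≤ Ln n, ∀ k < 2 ^ l,
    |(Ncnt X l k : ℝ) - n * F0 f0 l k| ≤
      M * Real.sqrt (((l : ℝ) + Ln n) * n / 2 ^ l)}

/-- The posterior mean `Ȳ_{ε0} = (1-π̃_{ε0})/2 + π̃_{ε0} (N_X(I_{ε0})+a)/(N_X(I_ε)+2a)`. -/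
def YbarNode {n : ℕ} (a : ℝ) (π : ℕ → ℝ) (X : Fin n → ℝ) (l k : ℕ) : ℝ :=
  (1 - piT a π X l k) * (1 / 2) +
    piT a π X l k * (((Ncnt X (l + 1) (2 * k) : ℝ) + a) / ((Ncnt X l k : ℝ) + 2 * a))

/-- Given a node function `Y : (l,k) ↦ Y_{ε0}`, the value of the tree variable at
depth `l ≥ 1` and position `k`: `Y_{ε0}` for even `k`, `1 - Y_{ε0}` for odd `k`. -/
def childT (Ynode : ℕ → ℕ → ℝ) (l k : ℕ) : ℝ :=
  if l = 0 then 1 / 2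
  else if k % 2 = 0 then Ynode (l - 1) (k / 2) else 1 - Ynode (l - 1) (k / 2)

/-- Product of the tree variables along the path to node `(l,k)`. -/
def pathProd (Ynode : ℕ → ℕ → ℝ) : ℕ → ℕ → ℝ
  | 0, _ => 1
  | l + 1, k => pathProd Ynode l (k / 2) * childT Ynode (l + 1) k

/-- Haar coefficient induced by a tree: `2^{l/2} p_ε (1 - 2 Y_{ε0})`. -/
def coefOfNodes (Ynode : ℕ → ℕ → ℝ) (l k : ℕ) : ℝ :=
  2 ^ ((l : ℝ) / 2) * pathProd Ynode l k * (1 - 2 * Ynode l k)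

/-- `p̄_ε`: mass of `I_ε` under the posterior mean. -/
def pbar {n : ℕ} (a : ℝ) (π : ℕ → ℝ) (X : Fin n → ℝ) (l k : ℕ) : ℝ :=
  pathProd (YbarNode a π X) l k

/-- The cut-off `𝓛 = 𝓛_n(α)` with `2^𝓛 = ⌊c₀ (n/log n)^{1/(1+2α)}⌋`. -/
def calL (c0 α : ℝ) (n : ℕ) : ℕ :=
  Nat.log 2 ⌊c0 * ((n : ℝ) / Real.log n) ^ (1 / (1 + 2 * α))⌋₊

/-- The minimax sup-norm rate `ε*_{n,α} = (log n/n)^{α/(2α+1)}`. -/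
def rateSup (α : ℝ) (n : ℕ) : ℝ := (Real.log n / n) ^ (α / (2 * α + 1))

/-- Supremum distance on `(0,1]`. -/
def supDist (f g : ℝ → ℝ) : ℝ := ⨆ x : Set.Ioc (0 : ℝ) 1, |f x.1 - g x.1|

/-- Multiscale norm `‖x‖_{M₀(w)} = sup_l max_{k<2^l} |x_{lk}|/w_l`. -/
def M0norm (w : ℕ → ℝ) (x : ℕ → ℕ → ℝ) : ℝ :=
  ⨆ l : ℕ, ⨆ k : Fin (2 ^ l), |x l (k : ℕ)| / w l

/-- Distance associated with the multiscale norm. -/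
def M0dist (w : ℕ → ℝ) (x y : ℕ → ℕ → ℝ) : ℝ := M0norm w fun l k => x l k - y l k

/-- Haar coefficients of the centering `C_n`:
empirical coefficients for `l ≤ L`, and `0` for `l > L`. -/
def CnArr {n : ℕ} (X : Fin n → ℝ) (l k : ℕ) : ℝ :=
  if l ≤ Ln n then (∑ i, psi l k (X i)) / n else 0

/-- Prior slab weights of Theorem 2: `π_l = e^{-κl}/Σ_{j=0}^{L} e^{-κj}`. -/
def priorW (κ : ℝ) (L : ℕ) (j : ℕ) : ℝ :=
  Real.exp (-κ * j) / ∑ i ∈ Finset.range (L + 1), Real.exp (-κ * i)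

/-- Unnormalized prior slab weights `π_l = e^{-κl}`. -/
def expW (κ : ℝ) (j : ℕ) : ℝ := Real.exp (-κ * j)

/-- Flat-initialisation slab weights: weight `1` (pure Beta) for nodes `ε` with `|ε| ≤ l₀`,
i.e. child depth `j = |ε|+1 ≤ l₀+1`, and `e^{-κ j}` beyond. -/
def flatW (κ : ℝ) (l0 : ℕ) (j : ℕ) : ℝ :=
  if j ≤ l0 + 1 then 1 else Real.exp (-κ * j)

/-- Median of a measure on `ℝ`. -/
def med (μ : Measure ℝ) : ℝ := sInf {t : ℝ | (1 / 2 : ENNReal) ≤ μ (Set.Iic t)}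

/-- The exponent `H(β,l)`: `β` for `l ≤ dL`, `α₀` for `l > dL`, `d = 1/α₀`. -/
def Hfun (α0 : ℝ) (L : ℕ) (β : ℝ) (l : ℕ) : ℝ := if (l : ℝ) ≤ (L : ℝ) / α0 then β else α0

/-- The norm `‖g‖_{β,L} = sup_l max_k 2^{l(H(β,l)+1/2)} |g_{lk}|`. -/
def normBL (α0 : ℝ) (L : ℕ) (β : ℝ) (g : ℕ → ℕ → ℝ) : ℝ :=
  ⨆ l : ℕ, ⨆ k : Fin (2 ^ l), 2 ^ ((l : ℝ) * (Hfun α0 L β l + 1 / 2)) * |g l (k : ℕ)|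

/-- Haar projection `K_j(f) = Σ_{l ≤ j-1} Σ_k ⟨f,ψ_{lk}⟩ ψ_{lk}`. -/
def Kproj (f : ℝ → ℝ) (j : ℕ) (t : ℝ) : ℝ :=
  ∑ l ∈ Finset.range j, ∑ k ∈ Finset.range (2 ^ l), haarCoef f l k * psi l k t

/-- Self-similar Hölder class `H_SS(α,M,ε)` (with base level `j₀`). -/
def selfSimilar (α Mc ε : ℝ) (j0 : ℕ) (f : ℝ → ℝ) : Prop :=
  holder α Mc f ∧ ∀ j : ℕ, j0 ≤ j → ε * 2 ^ (-(j : ℝ) * α) ≤ supDist (Kproj f j) f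

/-- Function reconstructed from an array of Haar coefficients. -/
def reconstruct (g : ℕ → ℕ → ℝ) (t : ℝ) : ℝ :=
  ∑' l : ℕ, ∑ k ∈ Finset.range (2 ^ l), g l k * psi l k t

/-- Bounded-Lipschitz distance between two measures, relative to a distance function `d`. -/
def BLdist {S : Type*} [MeasurableSpace S] (d : S → S → ℝ) (μ ν : Measure S) : ℝ :=
  ⨆ F : {F : S → ℝ // Measurable F ∧ ∃ c1 c2 : ℝ, 0 ≤ c1 ∧ 0 ≤ c2 ∧ c1 + c2 ≤ 1 ∧
      (∀ x, |F x| ≤ c1) ∧ ∀ x y, |F x - F y| ≤ c2 * d x y},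
    |(∫ x, F.1 x ∂μ) - ∫ x, F.1 x ∂ν|

/-- The recentering map `τ_{C_n} : f ↦ √n (f - C_n)` at the level of Haar coefficient arrays,
applied to a posterior draw of tree coordinates. -/
def tauMap {n : ℕ} (L : ℕ) (X : Fin n → ℝ) (y : Node L → ℝ) : ℕ → ℕ → ℝ :=
  fun l k => Real.sqrt n * (haarCoef (fY L y) l k - CnArr X l k)

/-- `∫ ψ_{lk} f₀`. -/
def psiMean (f0 : ℝ → ℝ) (l k : ℕ) : ℝ := ∫ t in Set.Ioc (0 : ℝ) 1, psi l k t * f0 t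

/-- Covariance of the `P_{f0}`-white bridge coordinates. -/
def covWB (f0 : ℝ → ℝ) (p q : ℕ × ℕ) : ℝ :=
  ∫ t in Set.Ioc (0 : ℝ) 1,
    (psi p.1 p.2 t - psiMean f0 p.1 p.2) * (psi q.1 q.2 t - psiMean f0 q.1 q.2) * f0 t

/-- `N` is a law of the `P_{f0}`-white bridge coordinate process: a probability measure
whose finite-dimensional linear marginals are centered Gaussian with the prescribed
covariance. -/
def isWhiteBridge (f0 : ℝ → ℝ) (N : Measure (ℕ → ℕ → ℝ)) : Prop :=
  IsProbabilityMeasure N ∧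
    ∀ c : (ℕ × ℕ) →₀ ℝ,
      N.map (fun x => ∑ p ∈ c.support, c p * x p.1 p.2) =
        ProbabilityTheory.gaussianReal 0
          (Real.toNNReal (∑ p ∈ c.support, ∑ q ∈ c.support, c p * c q * covWB f0 p q))

/-- The coordinate-wise marginal of the posterior at node `(l,k)`, `l < L`. -/
def postMarg {n : ℕ} (L : ℕ) (a : ℝ) (π : ℕ → ℝ) (X : Fin n → ℝ) (l k : ℕ) : Measure ℝ :=
  if h : l < L ∧ k < 2 ^ l then
    (post L a π X).map fun y => y ⟨⟨l, h.1⟩, ⟨k, h.2⟩⟩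
  else Measure.dirac (1 / 2 : ℝ)

/-- `ŷ_{ε0}`: the median of the marginal posterior of `Y_{ε0}` (`1/2` for `|ε| ≥ L`). -/
def yhatNode {n : ℕ} (L : ℕ) (a : ℝ) (π : ℕ → ℝ) (X : Fin n → ℝ) (l k : ℕ) : ℝ :=
  if l < L then med (postMarg L a π X l k) else 1 / 2

/-- The coefficients `f̂_{lk}` of the median-based pivot density estimator. -/
def fhat {n : ℕ} (L : ℕ) (a : ℝ) (π : ℕ → ℝ) (X : Fin n → ℝ) (l k : ℕ) : ℝ :=
  if l ≤ L then coefOfNodes (yhatNode L a π X) l k else 0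

/-- `ŷ_{ε0}` built from the explicit conjugate marginal posterior. -/
def yhatNodeE {n : ℕ} (L : ℕ) (a : ℝ) (π : ℕ → ℝ) (X : Fin n → ℝ) (l k : ℕ) : ℝ :=
  if l < L then med (margPost a π X l k) else 1 / 2

/-- Pivot coefficients built from the explicit conjugate marginal posterior medians. -/
def fhatE {n : ℕ} (L : ℕ) (a : ℝ) (π : ℕ → ℝ) (X : Fin n → ℝ) (l k : ℕ) : ℝ :=
  if l ≤ L then coefOfNodes (yhatNodeE L a π X) l k else 0

/-- `L̂`: the largest level carrying a nonzero coefficient of `f̂`. -/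
def Lhat (f : ℕ → ℕ → ℝ) : ℕ := sSup {l : ℕ | ∃ k < 2 ^ l, f l k ≠ 0}

/-- `α̂ = (1/2)[(1/L̂) log₂(n/log n) - 1]`. -/
def alphaHat (n Lh : ℕ) : ℝ :=
  (1 / 2) * ((1 / (Lh : ℝ)) * Real.logb 2 ((n : ℝ) / Real.log n) - 1)

/-- The quantile radius `R_n`: generalized `(1-γ)`-quantile of `√n ‖f - C_n‖_{M₀(w)}`
under the posterior. -/
def Rquant {n : ℕ} (L : ℕ) (a : ℝ) (π : ℕ → ℝ) (X : Fin n → ℝ) (w : ℕ → ℝ) (γ : ℝ) : ℝ :=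
  sInf {r : ℝ | ENNReal.ofReal (1 - γ) ≤
    post L a π X
      {y | Real.sqrt n *
        M0norm w (fun l k => haarCoef (fY L y) l k - CnArr X l k) ≤ r}}

/-- `l₀(n) = log n / log log n`. -/
def l0cred (n : ℕ) : ℕ := ⌊Real.log n / Real.log (Real.log n)⌋₊

/-- `w_l = √l log l`. -/
def wcred (l : ℕ) : ℝ := Real.sqrt l * Real.log l

/-- The credible band `C`, as a set of Haar-coefficient arrays. -/
def credSet {n : ℕ} (a : ℝ) (π : ℕ → ℝ) (X : Fin n → ℝ) (α0 γ un : ℝ) :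
    Set (ℕ → ℕ → ℝ) :=
  {g | M0norm wcred (fun l k => g l k - CnArr X l k) ≤
        Rquant (Ln n) a π X wcred γ / Real.sqrt n ∧
      normBL α0 (Ln n) (alphaHat n (Lhat (fhat (Ln n) a π X))) g ≤ un}

/-! With `s = q + p`, Stirling's bounds on `s!`, `q!` and `p!` give
`C(s,q) ≤ √(s / (2π q p)) e^{1/(12s)} s^s / (q^q p^p)`, the exponentials
`e^{-s} = e^{-q} e^{-p}` cancelling; and `s^s / (q^q p^p) = 2^s exp(-s KL(Be(q/s), Be(1/2)))`
exactly.
The second inequality is the reciprocal of the first together with Pinsker's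
inequality, which for `x = 2u - 1` reads `x² ≤ (1 + x) log (1 + x) + (1 - x) log (1 - x)` and
follows from `2x ≤ log ((1 + x) / (1 - x))` by integration. -/

open Real Topology Stirling
open scoped Nat

lemma log_stirlingSeq_le {n : ℕ} (hn : n ≠ 0) :
    log (stirlingSeq n) ≤ log √π + 1 / (12 * n) := by
  obtain ⟨m, rfl⟩ := Nat.exists_eq_succ_of_ne_zero hn
  -- Robbins' bound makes `log (stirlingSeq k) - 1 / (12 k)` increase to `log √π`.
  set g : ℕ → ℝ := fun k ↦ log (stirlingSeq (k + 1)) - 1 / (12 * ((k : ℝ) + 1))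
  have hg : Monotone g := by
    refine monotone_nat_of_le_succ fun k ↦ ?_
    have hstep := log_stirlingSeq_sdiff_le (k + 1)
    have htel : 1 / (12 * ((k : ℝ) + 1)) - 1 / (12 * ((k : ℝ) + 1 + 1)) =
        1 / (12 * ((k : ℝ) + 1) * ((k : ℝ) + 1 + 1)) := by
      field_simp; ring
    simp only [g]
    push_cast at hstep ⊢
    linarith
  have hlim : Tendsto g atTop (𝓝 (log √π - 0)) := by
    refine Tendsto.sub ?_ ?_
    · exact (continuousAt_log (by positivity)).tendsto.comp
        (tendsto_stirlingSeq_sqrt_pi.comp (tendsto_add_atTop_nat 1))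
    · simpa [mul_comm, div_eq_mul_inv] using
        (tendsto_one_div_add_atTop_nhds_zero_nat (𝕜 := ℝ)).div_const 12
  have := hg.ge_of_tendsto hlim m
  push_cast
  linarith

lemma factorial_le_stirling {n : ℕ} (hn : n ≠ 0) :
    (n ! : ℝ) ≤ √(2 * π * n) * (n / exp 1) ^ n * exp (1 / (12 * n)) := by
  have h : stirlingSeq n ≤ √π * exp (1 / (12 * n)) := by
    have hpos : 0 < stirlingSeq n := lt_of_lt_of_le (by positivity) (sqrt_pi_le_stirlingSeq hn)
    calc stirlingSeq n = exp (log (stirlingSeq n)) := (exp_log hpos).symm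
      _ ≤ exp (log √π + 1 / (12 * n)) := exp_le_exp.mpr (log_stirlingSeq_le hn)
      _ = √π * exp (1 / (12 * n)) := by rw [exp_add, exp_log (by positivity)]
  rw [stirlingSeq, div_le_iff₀ (by positivity)] at h
  calc (n ! : ℝ) ≤ √π * exp (1 / (12 * n)) * (√(2 * n) * (n / exp 1) ^ n) := h
    _ = √(2 * π * n) * (n / exp 1) ^ n * exp (1 / (12 * n)) := by
      rw [show 2 * π * n = π * (2 * n) by ring, sqrt_mul pi_pos.le]
      ring

def klBernoulliHalf (u : ℝ) : ℝ := u * log (2 * u) + (1 - u) * log (2 * (1 - u))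

lemma sq_le_one_add_mul_log_add_one_sub_mul_log {x : ℝ} (hx₀ : 0 ≤ x) (hx₁ : x < 1) :
    x ^ 2 ≤ (1 + x) * log (1 + x) + (1 - x) * log (1 - x) := by
  set F : ℝ → ℝ := fun y ↦ (1 + y) * log (1 + y) + (1 - y) * log (1 - y) - y ^ 2
  have hF : ∀ y ∈ Set.Icc 0 x, HasDerivAt F (log ((1 + y) / (1 - y)) - 2 * y) y := by
    intro y ⟨hy₀, hyx⟩
    have hp : 1 + y ≠ 0 := by linarith
    have hm : 1 - y ≠ 0 := by linarith
    have := ((((hasDerivAt_id y).const_add 1).mul (((hasDerivAt_id y).const_add 1).log hp)).add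
      (((hasDerivAt_id y).const_sub 1).mul (((hasDerivAt_id y).const_sub 1).log hm))).sub
      (hasDerivAt_pow 2 y)
    refine this.congr_deriv ?_
    rw [log_div hp hm]
    simp only [id, Nat.cast_ofNat]
    field_simp
    ring
  have hmono : MonotoneOn F (Set.Icc 0 x) := by
    refine monotoneOn_of_hasDerivWithinAt_nonneg (convex_Icc 0 x)
      (fun y hy ↦ (hF y hy).continuousAt.continuousWithinAt)
      (fun y hy ↦ (hF y (interior_subset hy)).hasDerivWithinAt) fun y hy ↦ ?_
    rw [interior_Icc] at hy
    -- `2 y` is the first term of the series `log ((1 + y) / (1 - y)) = 2 ∑ y^(2i+1) / (2i+1)`.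
    have := sum_range_le_log_div hy.1.le (hy.2.trans hx₁) 1
    simp only [Finset.sum_range_one] at this
    norm_num at this
    linarith
  have := hmono ⟨le_rfl, hx₀⟩ ⟨hx₀, le_rfl⟩ hx₀
  simp only [F] at this
  norm_num at this
  linarith

lemma two_mul_sq_sub_half_le_klBernoulliHalf {u : ℝ} (hu₀ : 0 < u) (hu₁ : u < 1) :
    2 * (u - 1 / 2) ^ 2 ≤ klBernoulliHalf u := by
  have key : (2 * u - 1) ^ 2 ≤ (1 + (2 * u - 1)) * log (1 + (2 * u - 1)) +
      (1 - (2 * u - 1)) * log (1 - (2 * u - 1)) := by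
    rcases le_total 0 (2 * u - 1) with h | h
    · exact sq_le_one_add_mul_log_add_one_sub_mul_log h (by linarith)
    · have := sq_le_one_add_mul_log_add_one_sub_mul_log (x := -(2 * u - 1)) (by linarith)
        (by linarith)
      rw [neg_sq, show 1 + -(2 * u - 1) = 1 - (2 * u - 1) by ring,
        show 1 - -(2 * u - 1) = 1 + (2 * u - 1) by ring] at this
      linarith
  rw [show 1 + (2 * u - 1) = 2 * u by ring, show 1 - (2 * u - 1) = 2 * (1 - u) by ring] at key
  rw [klBernoulliHalf]
  nlinarith

lemma exp_neg_mul_klBernoulliHalf {q p : ℕ} (hq : 0 < q) (hp : 0 < p) :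
    exp (-((q : ℝ) + p) * klBernoulliHalf (q / (q + p))) =
      ((q : ℝ) + p) ^ (q + p) / (2 ^ (q + p) * (q : ℝ) ^ q * (p : ℝ) ^ p) := by
  have hexp : -((q : ℝ) + p) * klBernoulliHalf (q / (q + p)) =
      -(log ((2 * (q / (q + p))) ^ q) + log ((2 * (p / (q + p))) ^ p)) := by
    rw [klBernoulliHalf, show 1 - (q : ℝ) / (q + p) = p / (q + p) by field_simp; ring,
      log_pow, log_pow]
    field_simp
  rw [hexp, exp_neg, exp_add, exp_log (by positivity), exp_log (by positivity), mul_pow, mul_pow,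
    div_pow, div_pow, pow_add, pow_add]
  field_simp

lemma add_choose_le_stirling {q p : ℕ} (hq : 0 < q) (hp : 0 < p) :
    ((q + p).choose q : ℝ) ≤ √((q + p) / (2 * π * q * p)) * exp (1 / (12 * (q + p))) *
      (((q : ℝ) + p) ^ (q + p) / ((q : ℝ) ^ q * (p : ℝ) ^ p)) := by
  have hfac := factorial_le_stirling (n := q + p) (by omega)
  have hfac_q := le_factorial_stirling q
  have hfac_p := le_factorial_stirling p
  push_cast at hfac
  have hsqrt : √((q + p) / (2 * π * q * p)) =
      √(2 * π * (q + p)) / (√(2 * π * q) * √(2 * π * p)) := by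
    rw [← sqrt_mul (by positivity), ← sqrt_div' _ (by positivity)]
    congr 1
    field_simp
  calc ((q + p).choose q : ℝ) = (q + p)! / (q ! * p !) := Nat.cast_add_choose ℝ
    _ ≤ √(2 * π * (q + p)) * ((q + p) / exp 1) ^ (q + p) * exp (1 / (12 * (q + p))) /
        (√(2 * π * q) * (q / exp 1) ^ q * (√(2 * π * p) * (p / exp 1) ^ p)) := by
      gcongr
    _ = _ := by
      rw [hsqrt, div_pow, div_pow, div_pow, pow_add, pow_add]
      field_simp

lemma choose_le_two_pow_mul_exp_neg_klBernoulliHalf {s q : ℕ} (hq : 0 < q) (hqs : q < s) :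
    (s.choose q : ℝ) ≤ 2 ^ s * √(s / (2 * π * q * (s - q))) * exp (1 / (12 * s)) *
      exp (-(s : ℝ) * klBernoulliHalf (q / s)) := by
  obtain ⟨p, rfl⟩ : ∃ p, s = q + p := ⟨s - q, by omega⟩
  have hp : 0 < p := by omega
  push_cast
  rw [add_sub_cancel_left, exp_neg_mul_klBernoulliHalf hq hp]
  refine (add_choose_le_stirling hq hp).trans_eq ?_
  field_simp

lemma sqrt_mul_exp_le_two_pow_div_choose {s q : ℕ} (hq : 0 < q) (hqs : q < s) :
    √(2 * π * q * (s - q) / s) * exp (-(1 / (12 * s))) * exp (2 * s * (q / s - 1 / 2) ^ 2) ≤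
      2 ^ s / (s.choose q : ℝ) := by
  have hs : (0 : ℝ) < s := by exact_mod_cast hq.trans hqs
  have hu₀ : (0 : ℝ) < q / s := by positivity
  have hu₁ : (q : ℝ) / s < 1 := (div_lt_one hs).mpr (by exact_mod_cast hqs)
  have hchoose : (0 : ℝ) < s.choose q := by exact_mod_cast Nat.choose_pos hqs.le
  have hpinsker : 2 * s * (q / s - 1 / 2) ^ 2 ≤ s * klBernoulliHalf (q / s) := by
    linarith [mul_le_mul_of_nonneg_left (two_mul_sq_sub_half_le_klBernoulliHalf hu₀ hu₁) hs.le]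
  calc √(2 * π * q * (s - q) / s) * exp (-(1 / (12 * s))) * exp (2 * s * (q / s - 1 / 2) ^ 2)
      ≤ √(2 * π * q * (s - q) / s) * exp (-(1 / (12 * s))) *
          exp (s * klBernoulliHalf (q / s)) := by
        gcongr
    _ = 2 ^ s / (2 ^ s * √(s / (2 * π * q * (s - q))) * exp (1 / (12 * s)) *
          exp (-(s : ℝ) * klBernoulliHalf (q / s))) := by
        rw [← inv_div (s : ℝ), sqrt_inv, exp_neg, neg_mul, exp_neg]
        field_simp
    _ ≤ 2 ^ s / (s.choose q : ℝ) :=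
        div_le_div_of_nonneg_left (by positivity) hchoose
          (choose_le_two_pow_mul_exp_neg_klBernoulliHalf hq hqs)

/-- Stirling-type bound for binomial coefficients via the Bernoulli
Kullback-Leibler divergence, and the resulting lower bound on `2^s / C(s,q)`. -/
theorem statement19 (s q : ℕ) (h0 : 0 < q) (hqs : q < s) :
    (Nat.choose s q : ℝ) ≤
        2 ^ s * Real.sqrt ((s : ℝ) / (2 * Real.pi * q * ((s : ℝ) - q))) *
          Real.exp (1 / (12 * s)) *
          Real.exp (-(s : ℝ) *
            (((q : ℝ) / s) * Real.log (2 * ((q : ℝ) / s)) +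
              (1 - (q : ℝ) / s) * Real.log (2 * (1 - (q : ℝ) / s)))) ∧
    Real.sqrt (2 * Real.pi * q * ((s : ℝ) - q) / s) * Real.exp (-(1 / (12 * s))) *
        Real.exp (2 * s * ((q : ℝ) / s - 1 / 2) ^ 2) ≤
      2 ^ s / (Nat.choose s q : ℝ) :=
  ⟨choose_le_two_pow_mul_exp_neg_klBernoulliHalf h0 hqs,
    sqrt_mul_exp_le_two_pow_div_choose h0 hqs⟩

end SSPT
end
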